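/- arXiv:math/0307100 — 3 statements merged into one kernel-verified Lean document; each statement's English description precedes it below -/
import Mathlib

section
/- The kernel of the natural map i_*: H_ℓ^Q(G;A) → H_ℓ(G;A) is annihilated by |Q| for every ℓ. -/
namespace IGC

noncomputable section
set_option linter.unusedSectionVars false

/-- The group of `n`-chains of the bar complex of `G` with coefficients in `A`
(trivial `G`-action): the free `A`-module on `n`-tuples of elements of `G`. -/
abbrev C (G : Type*) [Group G] (A : Type*) [AddCommGroup A] (n : ℕ) : Type _ :=
  (Fin n → G) →₀ A

/-- The `i`-th face of a bar symbol `[g_1|⋯|g_{n+1}]`. -/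
def barFace {G : Type*} [Group G] {n : ℕ} (i : Fin (n + 2)) (g : Fin (n + 1) → G) :
    Fin n → G := fun j =>
  if (j : ℕ) + 1 < (i : ℕ) then g j.castSucc
  else if (j : ℕ) + 1 = (i : ℕ) then g j.castSucc * g j.succ
  else g j.succ

/-- The boundary map of the bar complex. -/
def barD (G : Type*) [Group G] (A : Type*) [AddCommGroup A] (n : ℕ) :
    C G A (n + 1) →+ C G A n :=
  Finsupp.liftAddHom fun g =>
    { toFun := fun a => ∑ i : Fin (n + 2), Finsupp.single (barFace i g) (((-1 : ℤ) ^ (i : ℕ)) • a)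
      map_zero' := by simp
      map_add' := fun a b => by
        simp [smul_add, Finsupp.single_add, Finset.sum_add_distrib] }

lemma barD_single {G : Type*} [Group G] {A : Type*} [AddCommGroup A] (n : ℕ)
    (g : Fin (n + 1) → G) (a : A) :
    barD G A n (Finsupp.single g a) =
      ∑ i : Fin (n + 2), Finsupp.single (barFace i g) (((-1 : ℤ) ^ (i : ℕ)) • a) := by
  rw [barD, Finsupp.liftAddHom_apply_single]; rfl

/-- The boundary map out of degree `n` (the zero map for `n = 0`). -/
def barDFrom (G : Type*) [Group G] (A : Type*) [AddCommGroup A] :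
    (n : ℕ) → C G A n →+ C G A (n - 1)
  | 0 => 0
  | n + 1 => barD G A n

/-- The chain map on bar complexes induced by a group homomorphism. -/
def chainMapOf (G : Type*) [Group G] (A : Type*) [AddCommGroup A] {H : Type*} [Group H]
    (φ : H →* G) (n : ℕ) : C H A n →+ C G A n :=
  Finsupp.mapDomain.addMonoidHom fun g j => φ (g j)

lemma chainMapOf_single (G : Type*) [Group G] (A : Type*) [AddCommGroup A] {H : Type*} [Group H]
    (φ : H →* G) (n : ℕ) (g : Fin n → H) (a : A) :
    chainMapOf G A φ n (Finsupp.single g a) = Finsupp.single (fun j => φ (g j)) a := by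
  rw [chainMapOf, Finsupp.mapDomain.addMonoidHom_apply, Finsupp.mapDomain_single]

lemma barFace_comp {G : Type*} [Group G] {H : Type*} [Group H] (φ : H →* G) {n : ℕ}
    (i : Fin (n + 2)) (g : Fin (n + 1) → H) :
    (barFace i fun j => φ (g j)) = fun j => φ (barFace i g j) := by
  funext j
  unfold barFace
  split_ifs <;> simp

lemma chainMapOf_barD (G : Type*) [Group G] (A : Type*) [AddCommGroup A] {H : Type*} [Group H]
    (φ : H →* G) (n : ℕ) :
    (barD G A n).comp (chainMapOf G A φ (n + 1)) = (chainMapOf G A φ n).comp (barD H A n) := by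
  apply Finsupp.addHom_ext
  intro g a
  rw [AddMonoidHom.comp_apply, AddMonoidHom.comp_apply, chainMapOf_single, barD_single,
    barD_single, map_sum]
  refine Finset.sum_congr rfl fun i _ => ?_
  rw [chainMapOf_single, barFace_comp]

lemma chainMapOf_comp (G : Type*) [Group G] (A : Type*) [AddCommGroup A]
    {H K : Type*} [Group H] [Group K] (ψ : H →* G) (φ : K →* H) (n : ℕ) :
    (chainMapOf G A ψ n).comp (chainMapOf H A φ n) = chainMapOf G A (ψ.comp φ) n := by
  apply Finsupp.addHom_ext
  intro g a
  rw [AddMonoidHom.comp_apply, chainMapOf_single, chainMapOf_single, chainMapOf_single]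
  rfl

section Action

variable (G : Type*) [Group G] (A : Type*) [AddCommGroup A]
variable (Q : Type*) [Group Q] [Fintype Q] [MulDistribMulAction Q G]

/-- The action of `q : Q` on bar chains. -/
def qMap (q : Q) (n : ℕ) : C G A n →+ C G A n :=
  chainMapOf G A (MulDistribMulAction.toMonoidHom G q) n

/-- The subgroup of `Q`-fixed elements of `G`. -/
def fixedSubgroup : Subgroup G where
  carrier := {g | ∀ q : Q, q • g = g}
  one_mem' := fun q => smul_one q
  mul_mem' := fun ha hb q => by rw [smul_mul', ha q, hb q]
  inv_mem' := fun ha q => by rw [smul_inv', ha q]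

/-- The subcomplex of `Q`-invariant bar chains. -/
def invC (n : ℕ) : AddSubgroup (C G A n) :=
  ⨅ q : Q, (qMap G A Q q n - AddMonoidHom.id (C G A n)).ker

/-- Cycles of the bar complex. -/
def cycles (n : ℕ) : AddSubgroup (C G A n) := (barDFrom G A n).ker

/-- Boundaries of the bar complex. -/
def boundaries (n : ℕ) : AddSubgroup (C G A n) := (barD G A n).range

/-- The group homology `H_n(G;A)` (with trivial action on `A`), computed from the bar complex. -/
abbrev barHomology (n : ℕ) : Type _ :=
  cycles G A n ⧸ (boundaries G A n).addSubgroupOf (cycles G A n)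

/-- `Q`-invariant cycles. -/
def invCycles (n : ℕ) : AddSubgroup (C G A n) := invC G A Q n ⊓ cycles G A n

/-- Boundaries of `Q`-invariant chains. -/
def invBoundaries (n : ℕ) : AddSubgroup (C G A n) := (invC G A Q (n + 1)).map (barD G A n)

/-- `H_n^Q(G;A)`: the homology of the subcomplex of `Q`-invariant bar chains. -/
abbrev invHomology (n : ℕ) : Type _ :=
  invCycles G A Q n ⧸ (invBoundaries G A Q n).addSubgroupOf (invCycles G A Q n)

/-- The map `i_* : H_n^Q(G;A) → H_n(G;A)` induced by the inclusion of complexes. -/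
def inclHom (n : ℕ) : invHomology G A Q n →+ barHomology G A n :=
  QuotientAddGroup.map _ _ (AddSubgroup.inclusion inf_le_right) (by
    intro x hx
    rw [AddSubgroup.mem_addSubgroupOf] at hx
    rw [AddSubgroup.mem_comap, AddSubgroup.mem_addSubgroupOf]
    obtain ⟨y, -, hy⟩ := hx
    exact ⟨y, hy⟩)

/-- The subgroup `H_n(G;A)^Q` of `Q`-invariant homology classes. -/
def invariantClasses (n : ℕ) : AddSubgroup (barHomology G A n) :=
  ((⨅ q : Q, (boundaries G A n).comap (qMap G A Q q n - AddMonoidHom.id (C G A n))).addSubgroupOf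
    (cycles G A n)).map
      (QuotientAddGroup.mk' ((boundaries G A n).addSubgroupOf (cycles G A n)))

lemma chainMapOf_fixed_mem_invC (n : ℕ) (c : C (fixedSubgroup G Q) A n) :
    chainMapOf G A (fixedSubgroup G Q).subtype n c ∈ invC G A Q n := by
  have key : ∀ q : Q, (qMap G A Q q n).comp (chainMapOf G A (fixedSubgroup G Q).subtype n)
      = chainMapOf G A (fixedSubgroup G Q).subtype n := by
    intro q
    rw [qMap, chainMapOf_comp]
    congr 1
    ext x
    exact x.2 q
  rw [invC, AddSubgroup.mem_iInf]
  intro q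
  rw [AddMonoidHom.mem_ker, AddMonoidHom.sub_apply, sub_eq_zero, AddMonoidHom.id_apply,
    ← AddMonoidHom.comp_apply, key q]


lemma chainMapOf_barDFrom (n : ℕ) (c : C (fixedSubgroup G Q) A n) :
    barDFrom G A n (chainMapOf G A (fixedSubgroup G Q).subtype n c)
      = chainMapOf G A (fixedSubgroup G Q).subtype (n - 1)
          (barDFrom (fixedSubgroup G Q) A n c) := by
  match n with
  | 0 => simp [barDFrom]
  | n + 1 =>
      show (barD G A n) (chainMapOf G A (fixedSubgroup G Q).subtype (n + 1) c) = _
      rw [← AddMonoidHom.comp_apply, chainMapOf_barD]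
      rfl

/-- The map `H_n(G^Q;A) → H_n^Q(G;A)` induced by the inclusion of complexes. -/
def subIncl (n : ℕ) : barHomology (fixedSubgroup G Q) A n →+ invHomology G A Q n :=
  QuotientAddGroup.map _ _
    (((chainMapOf G A (fixedSubgroup G Q).subtype n).comp
        (cycles (fixedSubgroup G Q) A n).subtype).codRestrict (invCycles G A Q n) (by
      intro x
      rw [invCycles, AddSubgroup.mem_inf]
      refine ⟨chainMapOf_fixed_mem_invC G A Q n _, AddMonoidHom.mem_ker.mpr ?_⟩
      rw [AddMonoidHom.comp_apply, AddSubgroup.coe_subtype, chainMapOf_barDFrom,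
        AddMonoidHom.mem_ker.mp x.2, map_zero]))
    (by
      intro x hx
      rw [AddSubgroup.mem_addSubgroupOf] at hx
      obtain ⟨σ, hσ⟩ := hx
      rw [AddSubgroup.mem_comap, AddSubgroup.mem_addSubgroupOf]
      show ((chainMapOf G A (fixedSubgroup G Q).subtype n).comp
        (cycles (fixedSubgroup G Q) A n).subtype) x ∈ invBoundaries G A Q n
      rw [AddMonoidHom.comp_apply, AddSubgroup.coe_subtype, ← hσ, ← AddMonoidHom.comp_apply,
        ← chainMapOf_barD]
      exact ⟨chainMapOf G A (fixedSubgroup G Q).subtype (n + 1) σ,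
        chainMapOf_fixed_mem_invC G A Q (n + 1) σ, rfl⟩)

/-- The subgroup generated by differences `q • c - c`, i.e. the kernel of the map
to the coinvariants (the cellular chains of the quotient space `BG/Q`). -/
def W (n : ℕ) : AddSubgroup (C G A n) :=
  ⨆ q : Q, (qMap G A Q q n - AddMonoidHom.id (C G A n)).range

/-- Cycles of the coinvariants complex (the cellular chain complex of `BG/Q`),
presented as chains whose boundary lies in `W`. -/
def quotCycles (n : ℕ) : AddSubgroup (C G A n) := (W G A Q (n - 1)).comap (barDFrom G A n)

/-- Boundaries of the coinvariants complex, presented in `C_n(G;A)`. -/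
def quotBoundaries (n : ℕ) : AddSubgroup (C G A n) := W G A Q n ⊔ (barD G A n).range

/-- `H_n(BG/Q;A)`: the homology of the coinvariants complex, i.e. of the
cellular chain complex of the quotient CW-complex `BG/Q`. -/
abbrev quotHomology (n : ℕ) : Type _ :=
  quotCycles G A Q n ⧸ (quotBoundaries G A Q n).addSubgroupOf (quotCycles G A Q n)

/-- The image of the norm map `N : C_n(BG/Q) → C_n(G)^Q` sending the class of a
bar symbol to the sum over its `Q`-orbit. -/
def normImage (n : ℕ) : AddSubgroup (C G ℤ n) :=
  letI := Classical.decEq (Fin n → G)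
  AddSubgroup.closure {c | ∃ g : Fin n → G,
    c = ∑ x ∈ Finset.image (fun q : Q => fun j => q • g j) Finset.univ, Finsupp.single x (1 : ℤ)}

/-- The degree-`n` part of the cokernel `D_• = C_•(G)^Q / N(C_•(BG/Q))` of the norm map. -/
abbrev DChains (n : ℕ) : Type _ :=
  invC G ℤ Q n ⧸ (normImage G Q n).addSubgroupOf (invC G ℤ Q n)

/-- Cycles of the quotient complex `D_•`. -/
def DCycles (n : ℕ) : AddSubgroup (C G ℤ n) :=
  invC G ℤ Q n ⊓ (normImage G Q (n - 1)).comap (barDFrom G ℤ n)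

/-- Boundaries of the quotient complex `D_•`. -/
def DBoundaries (n : ℕ) : AddSubgroup (C G ℤ n) :=
  normImage G Q n ⊔ (invC G ℤ Q (n + 1)).map (barD G ℤ n)

/-- `h_n(D_•)`: the homology of the cokernel of the norm map. -/
abbrev DHomology (n : ℕ) : Type _ :=
  DCycles G Q n ⧸ (DBoundaries G Q n).addSubgroupOf (DCycles G Q n)

/-- Cellular cochains of `BG/Q` with `ℤ/2` coefficients: homomorphisms on chains. -/
abbrev Cochain (n : ℕ) : Type _ := C G ℤ n →+ ZMod 2

/-- Cochains vanishing on a subgroup of chains. -/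
def vanishing (n : ℕ) (S : AddSubgroup (C G ℤ n)) : AddSubgroup (Cochain G n) where
  carrier := {f | ∀ c ∈ S, f c = 0}
  zero_mem' := fun c _ => rfl
  add_mem' := fun hf hg c hc => by
    rw [AddMonoidHom.add_apply, hf c hc, hg c hc, add_zero]
  neg_mem' := fun hf c hc => by
    rw [AddMonoidHom.neg_apply, hf c hc, neg_zero]

/-- Precomposition with a boundary map as the coboundary operator. -/
def precomp {n m : ℕ} (d : C G ℤ m →+ C G ℤ n) : Cochain G n →+ Cochain G m :=
  AddMonoidHom.mk' (fun f => f.comp d) (fun f g => by ext c; simp)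

/-- Cocycles of the `ℤ/2`-cochain complex of `BG/Q`. -/
def quotCocycles (q : ℕ) : AddSubgroup (Cochain G q) :=
  vanishing G q (W G ℤ Q q) ⊓ (precomp G (barD G ℤ q)).ker

/-- Coboundaries of the `ℤ/2`-cochain complex of `BG/Q`. -/
def quotCoboundaries (q : ℕ) : AddSubgroup (Cochain G q) :=
  (vanishing G (q - 1) (W G ℤ Q (q - 1))).map (precomp G (barDFrom G ℤ q))

/-- `H^q(BG/Q; ℤ/2)`: the cellular cohomology of the quotient space with `ℤ/2` coefficients. -/
abbrev quotCohomology (q : ℕ) : Type _ :=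
  quotCocycles G Q q ⧸ (quotCoboundaries G Q q).addSubgroupOf (quotCocycles G Q q)

end Action

/-- The action of `ℤˣ ≅ ℤ/2` on a commutative group by inversion (negation):
the nontrivial element acts by `g ↦ g⁻¹`. -/
instance negAction (Γ : Type*) [CommGroup Γ] : MulDistribMulAction ℤˣ Γ where
  smul u g := g ^ (u : ℤ)
  one_smul g := by show g ^ ((1 : ℤˣ) : ℤ) = g; simp
  mul_smul u v g := by
    show g ^ ((↑(u * v) : ℤ)) = (g ^ (v : ℤ)) ^ (u : ℤ)
    rw [Units.val_mul, mul_comm, zpow_mul]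
  smul_mul u a b := mul_zpow a b (u : ℤ)
  smul_one u := one_zpow _

end
end IGC

namespace IGC

variable {G : Type*} [Group G] {A : Type*} [AddCommGroup A] {Q : Type*} [Group Q]
  [MulDistribMulAction Q G]

lemma qMap_comp_qMap (q q' : Q) (n : ℕ) :
    (qMap G A Q q n).comp (qMap G A Q q' n) = qMap G A Q (q * q') n := by
  rw [qMap, qMap, qMap, chainMapOf_comp]
  congr 1
  ext g
  exact (mul_smul q q' g).symm

lemma barD_qMap (q : Q) (n : ℕ) (σ : C G A (n + 1)) :
    barD G A n (qMap G A Q q (n + 1) σ) = qMap G A Q q n (barD G A n σ) :=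
  DFunLike.congr_fun (chainMapOf_barD G A (MulDistribMulAction.toMonoidHom G q) n) σ

lemma mem_invC_iff {n : ℕ} {c : C G A n} : c ∈ invC G A Q n ↔ ∀ q : Q, qMap G A Q q n c = c := by
  simp only [invC, AddSubgroup.mem_iInf, AddMonoidHom.mem_ker, AddMonoidHom.sub_apply,
    AddMonoidHom.id_apply, sub_eq_zero]

variable [Fintype Q]

lemma sum_qMap_mem_invC (n : ℕ) (σ : C G A n) : ∑ q : Q, qMap G A Q q n σ ∈ invC G A Q n := by
  refine mem_invC_iff.mpr fun q => ?_
  simp_rw [map_sum, ← AddMonoidHom.comp_apply, qMap_comp_qMap]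
  exact Fintype.sum_equiv (Equiv.mulLeft q) _ _ fun _ => rfl

/-- Transfer: if `∂σ = z` with `z` invariant, the invariant chain `∑ q, q • σ` has boundary
`|Q| • z`. -/
lemma card_smul_mem_invBoundaries {n : ℕ} {z : C G A n} (hz : z ∈ invC G A Q n)
    (hzb : z ∈ boundaries G A n) : Fintype.card Q • z ∈ invBoundaries G A Q n := by
  obtain ⟨σ, rfl⟩ := hzb
  refine ⟨∑ q : Q, qMap G A Q q (n + 1) σ, sum_qMap_mem_invC (n + 1) σ, ?_⟩
  have hq : ∀ q : Q, barD G A n (qMap G A Q q (n + 1) σ) = barD G A n σ := fun q => by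
    rw [barD_qMap, mem_invC_iff.mp hz q]
  simp only [map_sum, hq, Finset.sum_const, Finset.card_univ]

end IGC

/-- the kernel of `i_* : H_ℓ^Q(G;A) → H_ℓ(G;A)` is annihilated by `|Q|`. -/
theorem stmt3 (G : Type*) [Group G] (A : Type*) [AddCommGroup A]
    (Q : Type*) [Group Q] [Fintype Q] [MulDistribMulAction Q G] (n : ℕ)
    (x : IGC.invHomology G A Q n) (hx : IGC.inclHom G A Q n x = 0) :
    Fintype.card Q • x = 0 := by
  obtain ⟨z, rfl⟩ := QuotientAddGroup.mk'_surjective _ x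
  rw [IGC.inclHom, QuotientAddGroup.map_mk', QuotientAddGroup.eq_zero_iff,
    AddSubgroup.mem_addSubgroupOf] at hx
  rw [← map_nsmul, QuotientAddGroup.mk'_apply, QuotientAddGroup.eq_zero_iff,
    AddSubgroup.mem_addSubgroupOf]
  exact IGC.card_smul_mem_invBoundaries z.2.1 hx
end

section
/- If G is a finite group, then H_i^Q(G;A) is annihilated by |G| for all i > 0. -/
/-! The map `S c = ∑ₕ [c|h]` satisfies `∂ S = S ∂ + (-1)ⁿ |G|` on `(n+1)`-chains: the faces of
`[g|h]` other than the last two are the `[∂ᵢ g|h]`, the next-to-last one is `[∂ₙ₊₁ g|h']` after the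
substitution `h' = gₙ₊₁ h`, and the last one is `g` itself, once for each `h`. Since `S` commutes
with every automorphism of `G`, it preserves `Q`-invariant chains, so `|G| z = ∂ (±S z)` for every
`Q`-invariant cycle `z` of positive degree. -/

namespace IGC

section SumSnoc

variable {G : Type*} [Group G] {A : Type*} [AddCommGroup A]

lemma barFace_castSucc_castSucc_snoc {n : ℕ} (i : Fin (n + 1)) (g : Fin (n + 1) → G) (h : G) :
    barFace i.castSucc.castSucc (Fin.snoc g h) = Fin.snoc (barFace i.castSucc g) h := by
  funext j
  induction j using Fin.lastCases with
  | last =>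
      have hi : (i : ℕ) ≤ n := Fin.is_le i
      simp only [barFace, Fin.val_castSucc, Fin.val_last, Fin.snoc_last]
      rw [if_neg (by omega), if_neg (by omega), Fin.succ_last, Fin.snoc_last]
  | cast j =>
      simp only [barFace, Fin.val_castSucc, Fin.snoc_castSucc]
      split_ifs <;> simp [-Fin.castSucc_succ, Fin.succ_castSucc, Fin.snoc_castSucc]

lemma barFace_castSucc_last_snoc {n : ℕ} (g : Fin (n + 1) → G) (h : G) :
    barFace (Fin.last (n + 1)).castSucc (Fin.snoc g h)
      = Fin.snoc (Fin.init g) (g (Fin.last n) * h) := by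
  funext j
  induction j using Fin.lastCases with
  | last =>
      simp only [barFace, Fin.val_castSucc, Fin.val_last, Fin.snoc_last]
      rw [if_neg (by omega), if_pos trivial, Fin.succ_last, Fin.snoc_last, Fin.snoc_castSucc]
  | cast j =>
      have hj : (j : ℕ) < n := j.isLt
      simp only [barFace, Fin.val_castSucc, Fin.val_last, Fin.snoc_castSucc]
      rw [if_pos (by omega)]
      rfl

lemma barFace_last_snoc {n : ℕ} (g : Fin (n + 1) → G) (h : G) :
    barFace (Fin.last (n + 2)) (Fin.snoc g h) = g := by
  funext j
  simp only [barFace, Fin.val_last]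
  rw [if_pos (by omega), Fin.snoc_castSucc]

lemma barFace_last {n : ℕ} (g : Fin (n + 1) → G) :
    barFace (Fin.last (n + 1)) g = Fin.init g := by
  funext j
  simp only [barFace, Fin.val_last]
  rw [if_pos (by omega)]
  rfl

variable (G A) [Fintype G]

/-- The chain-level transfer to the trivial subgroup. -/
noncomputable def sumSnoc (n : ℕ) : C G A n →+ C G A (n + 1) :=
  Finsupp.liftAddHom fun g => ∑ h : G, Finsupp.singleAddHom (Fin.snoc g h)

variable {G A}

lemma sumSnoc_single {n : ℕ} (g : Fin n → G) (a : A) :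
    sumSnoc G A n (Finsupp.single g a) = ∑ h : G, Finsupp.single (Fin.snoc g h) a := by
  simp [sumSnoc]

lemma barD_sumSnoc_single (n : ℕ) (g : Fin (n + 1) → G) (a : A) :
    barD G A (n + 1) (sumSnoc G A (n + 1) (Finsupp.single g a))
      = sumSnoc G A n (barD G A n (Finsupp.single g a))
        + ((-1 : ℤ) ^ n * Fintype.card G) • Finsupp.single g a := by
  have last_entry :
      ∑ h : G, Finsupp.single (Fin.snoc (Fin.init g) (g (Fin.last n) * h) : Fin (n + 1) → G)
        (((-1 : ℤ) ^ (n + 1)) • a)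
      = ∑ h : G, Finsupp.single (Fin.snoc (Fin.init g) h) (((-1 : ℤ) ^ (n + 1)) • a) :=
    Fintype.sum_equiv (Equiv.mulLeft (g (Fin.last n))) _ _ fun h => rfl
  simp only [sumSnoc_single, barD_single, map_sum, Fin.sum_univ_castSucc (n := n + 2),
    Fin.sum_univ_castSucc (n := n + 1), barFace_castSucc_castSucc_snoc,
    barFace_castSucc_last_snoc, barFace_last_snoc, Fin.val_castSucc, Fin.val_last,
    Finset.sum_add_distrib, map_add]
  rw [barFace_last, Finset.sum_comm, last_entry, Finset.sum_const, Finset.card_univ,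
    mul_comm, mul_smul, natCast_zsmul, ← Finsupp.smul_single,
    show (-1 : ℤ) ^ (n + 2) = (-1) ^ n by ring]

lemma barD_sumSnoc (n : ℕ) (c : C G A (n + 1)) :
    barD G A (n + 1) (sumSnoc G A (n + 1) c)
      = sumSnoc G A n (barD G A n c) + ((-1 : ℤ) ^ n * Fintype.card G) • c := by
  induction c using Finsupp.induction_linear with
  | zero => simp
  | add c d hc hd => simp only [map_add, hc, hd, smul_add]; abel
  | single g a => exact barD_sumSnoc_single n g a

lemma chainMapOf_sumSnoc (φ : G ≃* G) (n : ℕ) (c : C G A n) :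
    chainMapOf G A (φ : G →* G) (n + 1) (sumSnoc G A n c)
      = sumSnoc G A n (chainMapOf G A (φ : G →* G) n c) := by
  induction c using Finsupp.induction_linear with
  | zero => simp
  | add c d hc hd => simp only [map_add, hc, hd]
  | single g a =>
      simp only [sumSnoc_single, chainMapOf_single, map_sum]
      refine Fintype.sum_equiv φ.toEquiv _ _ fun h => ?_
      exact congrArg (Finsupp.single · a) (Fin.comp_snoc (⇑φ) g h)

end SumSnoc

section Invariants

variable {G : Type*} [Group G] {A : Type*} [AddCommGroup A]
  {Q : Type*} [Group Q] [MulDistribMulAction Q G]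

variable [Fintype G]

lemma sumSnoc_mem_invC {n : ℕ} {c : C G A n} (hc : c ∈ invC G A Q n) :
    sumSnoc G A n c ∈ invC G A Q (n + 1) := by
  rw [mem_invC_iff] at hc ⊢
  exact fun q => (chainMapOf_sumSnoc (MulDistribMulAction.toMulEquiv G q) n c).trans
    (congrArg _ (hc q))

lemma card_smul_mem_invBoundaries_s9 {n : ℕ} {c : C G A (n + 1)}
    (hc : c ∈ invCycles G A Q (n + 1)) :
    Fintype.card G • c ∈ invBoundaries G A Q (n + 1) := by
  obtain ⟨hinv, hcyc⟩ := AddSubgroup.mem_inf.mp hc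
  have hcyc : barD G A n c = 0 := AddMonoidHom.mem_ker.mp hcyc
  refine ⟨(-1 : ℤ) ^ n • sumSnoc G A (n + 1) c, zsmul_mem (sumSnoc_mem_invC hinv) _, ?_⟩
  rw [map_zsmul, barD_sumSnoc, hcyc, map_zero, zero_add, smul_smul, ← mul_assoc, ← pow_add,
    Even.neg_one_pow ⟨n, rfl⟩, one_mul, natCast_zsmul]

end Invariants

end IGC

theorem stmt9_general (G : Type*) [Group G] [Fintype G] (A : Type*) [AddCommGroup A]
    (Q : Type*) [Group Q] [MulDistribMulAction Q G] (i : ℕ) (hi : 0 < i)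
    (x : IGC.invHomology G A Q i) :
    Fintype.card G • x = 0 := by
  obtain ⟨n, rfl⟩ := Nat.exists_eq_add_one_of_ne_zero hi.ne'
  induction x using QuotientAddGroup.induction_on with
  | H c =>
    rw [← QuotientAddGroup.mk_nsmul, QuotientAddGroup.eq_zero_iff, AddSubgroup.mem_addSubgroupOf]
    exact IGC.card_smul_mem_invBoundaries_s9 c.2

/-- if `G` is finite, then `H_i^Q(G;A)` is annihilated by `|G|` for all `i > 0`. -/
theorem stmt9 (G : Type*) [Group G] [Fintype G] (A : Type*) [AddCommGroup A]
    (Q : Type*) [Group Q] [Fintype Q] [MulDistribMulAction Q G] (i : ℕ) (hi : 0 < i)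
    (x : IGC.invHomology G A Q i) :
    Fintype.card G • x = 0 :=
  stmt9_general G A Q i hi x
end

section
/- Let Z/2 act on Z by n ↦ -n, Γ = Z/2, X = BZ. Then H^q(X/Γ;Z/2) ≅ Z/2 for all q ≥ 1. -/
/-!
The `ℤ/2`-cochains of `X/Γ` are the invariant cochains of `X = Bℤ`. The fixed subcomplex `Y`
has the single simplex `[1|⋯|1]` in each degree and is acyclic, so in positive degrees
`X/Γ` has the cohomology of the pair `(X/Γ, Y)`, whose cochains are the invariant cochains
vanishing on `Y`. Each such cochain is a norm `s + τs`, where `s` is its restriction to one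
simplex in each free orbit, and `φ ↦ δs` is a Smith-type connecting map from
`H^(k+1)(X/Γ, Y)` to `H^(k+2)(X/Γ)`. It is an isomorphism because `Bℤ` has no cohomology
above degree one. We see this through an explicit contracting homotopy of the bar complex
of `ℤ`, obtained by comparing the bar resolution with the resolution `ℤ[t^±] → ℤ[t^±]`.
This leaves `H¹(X/Γ) = Hom(ℤ, ℤ/2) ≅ ℤ/2`, which is detected by the parity cocycle.
-/

namespace IGC

open Finsupp Multiplicative

noncomputable section

section Resolution

variable {G : Type*} [Group G] {A : Type*} [AddCommGroup A]

def mulHead {n : ℕ} (c : G) (y : Fin (n + 1) → G) : Fin (n + 1) → G :=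
  Function.update y 0 (c * y 0)

@[simp]
lemma mulHead_zero {n : ℕ} (c : G) (y : Fin (n + 1) → G) : mulHead c y 0 = c * y 0 := by
  simp [mulHead]

@[simp]
lemma mulHead_succ {n : ℕ} (c : G) (y : Fin (n + 1) → G) (j : Fin n) :
    mulHead c y j.succ = y j.succ := by
  simp [mulHead]

lemma tail_mulHead {n : ℕ} (c : G) (y : Fin (n + 1) → G) :
    Fin.tail (mulHead c y) = Fin.tail y :=
  funext (mulHead_succ c y)

lemma mulHead_cons {n : ℕ} (c u : G) (v : Fin n → G) :
    mulHead c (Fin.cons u v) = Fin.cons (c * u) v := by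
  ext j
  cases j using Fin.cases <;> simp

lemma mulHead_mulHead {n : ℕ} (c d : G) (y : Fin (n + 1) → G) :
    mulHead c (mulHead d y) = mulHead (c * d) y := by
  rw [← Fin.cons_self_tail y, mulHead_cons, mulHead_cons, mulHead_cons, mul_assoc]

lemma mulHead_head_cons_one_tail {n : ℕ} (y : Fin (n + 1) → G) :
    mulHead (y 0) (Fin.cons 1 (Fin.tail y)) = y := by
  rw [mulHead_cons, mul_one, Fin.cons_self_tail]

lemma barFace_zero {n : ℕ} (y : Fin (n + 1) → G) :
    barFace (0 : Fin (n + 2)) y = Fin.tail y := by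
  funext t
  simp [barFace, Fin.tail]

lemma barFace_one_cons_one {n : ℕ} (g : Fin (n + 1) → G) :
    barFace (1 : Fin (n + 3)) (Fin.cons 1 g) = g := by
  funext j
  cases j using Fin.cases <;> simp [barFace]

lemma barFace_succ_succ_cons_one {n : ℕ} (k : Fin (n + 1)) (g : Fin (n + 1) → G) :
    barFace k.succ.succ (Fin.cons 1 g) = Fin.cons 1 (barFace k.succ g) := by
  funext j
  cases j using Fin.cases <;> simp [barFace]

lemma barFace_zero_barFace_succ {n : ℕ} (j : Fin (n + 2)) (y : Fin (n + 2) → G) :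
    barFace 0 (barFace j.succ y) = barFace j (barFace 0 y) := by
  funext t
  rw [barFace_zero, barFace_zero]
  simp only [Fin.tail, barFace, Fin.val_succ, ← Fin.succ_castSucc]
  split_ifs <;> first | rfl | omega

lemma barFace_succ_mulHead {n : ℕ} (j : Fin (n + 2)) (c : G) (y : Fin (n + 2) → G) :
    barFace j.succ (mulHead c y) = mulHead c (barFace j.succ y) := by
  funext t
  cases t using Fin.cases with
  | zero =>
    simp only [barFace, Fin.val_succ, Fin.val_zero, Fin.castSucc_zero, mulHead_zero,
      mulHead_succ]
    split_ifs <;> simp_all [mul_assoc]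
  | succ m => simp [barFace]

def dropHead (n : ℕ) : C G A (n + 1) →+ C G A n :=
  mapDomain.addMonoidHom Fin.tail

def consOne (n : ℕ) : C G A n →+ C G A (n + 1) :=
  mapDomain.addMonoidHom fun y : Fin n → G => (Fin.cons 1 y : Fin (n + 1) → G)

def leftMul (n : ℕ) (c : G) : C G A (n + 1) →+ C G A (n + 1) :=
  mapDomain.addMonoidHom (mulHead c)

/-- The differential of the bar resolution of `ℤ` over `ℤ[G]`, reading the chain
`[g₀|g₁|⋯|gₙ]` as `g₀ · [g₁|⋯|gₙ]`; `dropHead` is then the map to the coinvariants. -/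
def resD (n : ℕ) : C G A (n + 1) →+ C G A n :=
  dropHead n - barD G A n

@[simp]
lemma dropHead_single (n : ℕ) (y : Fin (n + 1) → G) (a : A) :
    dropHead n (single y a) = single (Fin.tail y) a := by
  simp [dropHead]

@[simp]
lemma consOne_single (n : ℕ) (y : Fin n → G) (a : A) :
    consOne n (single y a) = single (Fin.cons 1 y) a := by
  simp [consOne]

@[simp]
lemma leftMul_single (n : ℕ) (c : G) (y : Fin (n + 1) → G) (a : A) :
    leftMul n c (single y a) = single (mulHead c y) a := by
  simp [leftMul]

lemma leftMul_leftMul (n : ℕ) (c d : G) (z : C G A (n + 1)) :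
    leftMul n c (leftMul n d z) = leftMul n (c * d) z := by
  induction z using Finsupp.induction_linear with
  | zero => simp
  | add f g hf hg => simp [hf, hg]
  | single y a => simp [mulHead_mulHead]

lemma single_eq_leftMul_consOne (n : ℕ) (y : Fin (n + 1) → G) (a : A) :
    single y a = leftMul n (y 0) (consOne n (single (Fin.tail y) a)) := by
  rw [consOne_single, leftMul_single, mulHead_head_cons_one_tail]

lemma dropHead_leftMul (n : ℕ) (c : G) (z : C G A (n + 1)) :
    dropHead n (leftMul n c z) = dropHead n z := by
  induction z using Finsupp.induction_linear with
  | zero => simp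
  | add f g hf hg => simp [hf, hg]
  | single y a => simp [tail_mulHead]

lemma dropHead_consOne (n : ℕ) (z : C G A n) : dropHead n (consOne n z) = z := by
  induction z using Finsupp.induction_linear with
  | zero => simp
  | add f g hf hg => simp [hf, hg]
  | single y a => simp

lemma barD_zero : barD G A 0 = 0 := by
  refine Finsupp.addHom_ext fun y a => ?_
  simp [barD_single, Fin.sum_univ_two, Subsingleton.elim (barFace 1 y) (barFace 0 y)]

lemma barD_one_single (y : Fin 2 → G) (a : A) :
    barD G A 1 (single y a) =
      single (fun _ => y 1) a - single (fun _ => y 0 * y 1) a + single (fun _ => y 0) a := by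
  have h0 : barFace (0 : Fin 3) y = fun _ => y 1 := by
    funext j; simp [barFace, Subsingleton.elim j 0]
  have h1 : barFace (1 : Fin 3) y = fun _ => y 0 * y 1 := by
    funext j; simp [barFace, Subsingleton.elim j 0]
  have h2 : barFace (2 : Fin 3) y = fun _ => y 0 := by
    funext j; simp [barFace, Subsingleton.elim j 0]
  rw [barD_single, Fin.sum_univ_three, h0, h1, h2]
  simp [sub_eq_add_neg]

lemma resD_single (n : ℕ) (y : Fin (n + 1) → G) (a : A) :
    resD n (single y a) =
      ∑ k : Fin (n + 1), single (barFace k.succ y) ((-1 : ℤ) ^ (k : ℕ) • a) := by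
  simp [resD, barD_single, Fin.sum_univ_succ, barFace_zero, pow_succ, sub_eq_add_neg]

lemma barD_consOne (n : ℕ) (z : C G A (n + 1)) :
    barD G A (n + 1) (consOne (n + 1) z) = consOne n (resD n z) := by
  induction z using Finsupp.induction_linear with
  | zero => simp
  | add f g hf hg => simp [hf, hg]
  | single g a =>
    rw [consOne_single, barD_single, Fin.sum_univ_succ, Fin.sum_univ_succ, resD_single, map_sum,
      Fin.succ_zero_eq_one, barFace_one_cons_one]
    simp [barFace_zero, barFace_succ_succ_cons_one, pow_succ]

lemma resD_consOne (n : ℕ) (z : C G A (n + 1)) :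
    resD (n + 1) (consOne (n + 1) z) = z - consOne n (resD n z) := by
  rw [resD, AddMonoidHom.sub_apply, dropHead_consOne, barD_consOne]

lemma dropHead_barD (n : ℕ) (z : C G A (n + 2)) :
    dropHead n (barD G A (n + 1) z) =
      dropHead n (dropHead (n + 1) z) - barD G A n (dropHead (n + 1) z) := by
  induction z using Finsupp.induction_linear with
  | zero => simp
  | add f g hf hg => simp only [map_add, hf, hg]; abel
  | single y a =>
    simp [barD_single, Fin.sum_univ_succ (n := n + 2), ← barFace_zero, barFace_zero_barFace_succ,
      pow_succ, sub_eq_add_neg]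

lemma dropHead_resD (n : ℕ) (z : C G A (n + 2)) :
    dropHead n (resD (n + 1) z) = barD G A n (dropHead (n + 1) z) := by
  rw [resD, AddMonoidHom.sub_apply, map_sub, dropHead_barD, sub_sub_cancel]

lemma resD_leftMul (n : ℕ) (c : G) (z : C G A (n + 2)) :
    resD (n + 1) (leftMul (n + 1) c z) = leftMul n c (resD (n + 1) z) := by
  induction z using Finsupp.induction_linear with
  | zero => simp
  | add f g hf hg => simp [hf, hg]
  | single y a => simp [resD_single, barFace_succ_mulHead]

lemma resD_resD : ∀ (n : ℕ) (z : C G A (n + 2)), resD n (resD (n + 1) z) = 0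
  | 0, z => by
    induction z using Finsupp.induction_linear with
    | zero => simp
    | add f g hf hg => simp [hf, hg]
    | single y a =>
      simp only [resD_single, map_sum]
      simp [Subsingleton.elim (barFace 1 (barFace 1 y)) (barFace 1 (barFace 2 y))]
  | n + 1, z => by
    induction z using Finsupp.induction_linear with
    | zero => simp
    | add f g hf hg => simp [hf, hg]
    | single y a =>
      -- by equivariance it suffices to treat `[1|x]`, on which `consOne` contracts `resD`
      rw [single_eq_leftMul_consOne, resD_leftMul, resD_leftMul, resD_consOne, map_sub,
        resD_consOne, resD_resD n, map_zero, sub_zero, sub_self, map_zero]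

lemma barD_barD (n : ℕ) (z : C G A (n + 2)) : barD G A n (barD G A (n + 1) z) = 0 := by
  have h := resD_resD n z
  rw [resD, resD, AddMonoidHom.sub_apply, AddMonoidHom.sub_apply, map_sub, map_sub,
    dropHead_barD] at h
  simpa using h

/-- The equivariant extension of `x ↦ consOne (w x)` from the chains with head `1`. -/
def liftCycle {n : ℕ} (w : C G A (n + 1) →+ C G A (n + 1)) :
    C G A (n + 1) →+ C G A (n + 2) :=
  Finsupp.liftAddHom fun y => (leftMul (n + 1) (y 0)).comp
    ((consOne (n + 1)).comp (w.comp (singleAddHom (Fin.cons 1 (Fin.tail y)))))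

lemma liftCycle_single {n : ℕ} (w : C G A (n + 1) →+ C G A (n + 1)) (y : Fin (n + 1) → G)
    (a : A) : liftCycle w (single y a) =
      leftMul (n + 1) (y 0) (consOne (n + 1) (w (single (Fin.cons 1 (Fin.tail y)) a))) := by
  simp [liftCycle]

lemma liftCycle_leftMul {n : ℕ} (w : C G A (n + 1) →+ C G A (n + 1)) (c : G)
    (z : C G A (n + 1)) : liftCycle w (leftMul n c z) = leftMul (n + 1) c (liftCycle w z) := by
  induction z using Finsupp.induction_linear with
  | zero => simp
  | add f g hf hg => simp [hf, hg]
  | single y a => simp [liftCycle_single, tail_mulHead, leftMul_leftMul]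

lemma resD_liftCycle {n : ℕ} (w : C G A (n + 2) →+ C G A (n + 2))
    (hw : ∀ z, resD (n + 1) (w z) = 0)
    (hcomm : ∀ c z, w (leftMul (n + 1) c z) = leftMul (n + 1) c (w z))
    (z : C G A (n + 2)) : resD (n + 2) (liftCycle w z) = w z := by
  induction z using Finsupp.induction_linear with
  | zero => simp
  | add f g hf hg => simp [hf, hg]
  | single y a =>
    rw [liftCycle_single, resD_leftMul, resD_consOne, hw, map_zero, sub_zero, ← hcomm,
      leftMul_single, mulHead_head_cons_one_tail]

end Resolution

section DiscretePrimitive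

variable {M : Type*} [AddCommGroup M]

/-- `∑_{0 ≤ j < b} f j`, extended to `b < 0` so that `primitive_add_one` holds for all `b`. -/
def primitive (f : ℤ → M) (b : ℤ) : M :=
  ∑ k ∈ Finset.range b.toNat, f k - ∑ k ∈ Finset.range (-b).toNat, f (-(k + 1))

@[simp]
lemma primitive_zero (f : ℤ → M) : primitive f 0 = 0 := by
  simp [primitive]

lemma primitive_add_one (f : ℤ → M) (b : ℤ) : primitive f (b + 1) = primitive f b + f b := by
  rcases le_or_gt 0 b with h | h
  · rw [primitive, primitive, show (b + 1).toNat = b.toNat + 1 by omega,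
      show (-(b + 1)).toNat = 0 by omega, show (-b).toNat = 0 by omega, Finset.sum_range_succ,
      Int.toNat_of_nonneg h]
    simp
  · rw [primitive, primitive, show (b + 1).toNat = 0 by omega, show b.toNat = 0 by omega,
      show (-b).toNat = (-(b + 1)).toNat + 1 by omega, Finset.sum_range_succ,
      Int.toNat_of_nonneg (by omega : 0 ≤ -(b + 1)), show -(-(b + 1) + 1) = b by ring]
    simp

lemma primitive_sub_one (f : ℤ → M) (b : ℤ) :
    primitive f (b - 1) = primitive f b - f (b - 1) := by
  rw [eq_sub_iff_add_eq, ← primitive_add_one, sub_add_cancel]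

lemma map_primitive {N : Type*} [AddCommGroup N] (ψ : M →+ N) (f : ℤ → M) (b : ℤ) :
    ψ (primitive f b) = primitive (fun j => ψ (f j)) b := by
  simp [primitive, map_sum]

lemma primitive_add (f : ℤ → M) (u v : ℤ) :
    primitive f (u + v) = primitive f u + primitive (fun j => f (u + j)) v := by
  induction v using Int.induction_on with
  | zero => simp
  | succ k ih => rw [← add_assoc, primitive_add_one, ih, primitive_add_one, add_assoc]
  | pred k ih =>
    rw [← add_sub_assoc, primitive_sub_one, ih, primitive_sub_one, add_sub_assoc, add_sub_assoc]

lemma primitive_sub_eq (F : ℤ → M) (b : ℤ) :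
    primitive (fun j => F (j + 1) - F j) b = F b - F 0 := by
  induction b using Int.induction_on with
  | zero => simp
  | succ k ih => rw [primitive_add_one, ih]; abel
  | pred k ih => rw [primitive_sub_one, ih, sub_add_cancel]; abel

end DiscretePrimitive

local notation "ℤₘ" => Multiplicative ℤ

section ContractionOfZ

def edge (x : ℤ) : C ℤₘ ℤ 2 :=
  single (Fin.cons (ofAdd x) fun _ => ofAdd 1) 1

/-- The composite of the comparison maps between the bar resolution of `ℤ = ⟨t⟩` and the
resolution `ℤ[t^±] → ℤ[t^±]`, in degree one: `t^a · [t^b] ↦ ∑_{0 ≤ j < b} t^(a+j) · [t]`. -/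
def comparison : C ℤₘ ℤ 2 →+ C ℤₘ ℤ 2 :=
  Finsupp.liftAddHom fun y =>
    zmultiplesHom _ (primitive (fun j => edge (toAdd (y 0) + j)) (toAdd (y 1)))

lemma comparison_single (y : Fin 2 → ℤₘ) (a : ℤ) :
    comparison (single y a) =
      a • primitive (fun j => edge (toAdd (y 0) + j)) (toAdd (y 1)) := by
  simp [comparison]

lemma comparison_leftMul (c : ℤₘ) (z : C ℤₘ ℤ 2) :
    comparison (leftMul 1 c z) = leftMul 1 c (comparison z) := by
  induction z using Finsupp.induction_linear with
  | zero => simp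
  | add f g hf hg => simp [hf, hg]
  | single y a =>
    have hedge (x : ℤ) : leftMul 1 c (edge x) = edge (toAdd c + x) := by
      simp [edge, mulHead_cons]
    simp [comparison_single, map_primitive, hedge, mulHead, add_assoc]

lemma resD_one_single (y : Fin 2 → ℤₘ) (a : ℤ) :
    resD 1 (single y a) = single (fun _ => y 0 * y 1) a - single (fun _ => y 0) a := by
  rw [resD, AddMonoidHom.sub_apply, dropHead_single, barD_one_single]
  have : Fin.tail y = fun _ => y 1 := by funext j; simp [Fin.tail, Subsingleton.elim j 0]
  rw [this]
  abel

lemma resD_comparison (z : C ℤₘ ℤ 2) : resD 1 (comparison z) = resD 1 z := by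
  induction z using Finsupp.induction_linear with
  | zero => simp
  | add f g hf hg => simp [hf, hg]
  | single y a =>
    have hedge (x : ℤ) : resD 1 (edge x) =
        single (fun _ => ofAdd (x + 1)) 1 - single (fun _ => ofAdd x) 1 := by
      simp [edge, resD_one_single, ofAdd_add]
    rw [comparison_single, map_zsmul, map_primitive]
    simp only [hedge, add_assoc]
    rw [primitive_sub_eq (fun j => single (fun _ => ofAdd (toAdd (y 0) + j)) 1),
      resD_one_single]
    simp [smul_sub, ofAdd_add]

lemma comparison_resD (z : C ℤₘ ℤ 3) : comparison (resD 2 z) = 0 := by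
  induction z using Finsupp.induction_linear with
  | zero => simp
  | add f g hf hg => simp [hf, hg]
  | single y a =>
    rw [resD_single, Fin.sum_univ_three, map_add, map_add, comparison_single, comparison_single,
      comparison_single]
    simp [barFace, primitive_add, add_assoc]

/-- An equivariant homotopy on the bar resolution of `ℤ` between the identity and the
comparison with `ℤ[t^±] → ℤ[t^±]`, which vanishes in degrees above one. -/
def resHomotopy : (n : ℕ) → C ℤₘ ℤ (n + 2) →+ C ℤₘ ℤ (n + 3)
  | 0 => liftCycle (AddMonoidHom.id _ - comparison)
  | n + 1 => liftCycle (AddMonoidHom.id _ - (resHomotopy n).comp (resD (n + 2)))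

lemma resHomotopy_leftMul (n : ℕ) (c : ℤₘ) (z : C ℤₘ ℤ (n + 2)) :
    resHomotopy n (leftMul (n + 1) c z) = leftMul (n + 2) c (resHomotopy n z) := by
  cases n <;> exact liftCycle_leftMul _ c z

lemma resD_resHomotopy_resD : ∀ (n : ℕ) (z : C ℤₘ ℤ (n + 3)),
    resD (n + 2) (resHomotopy n (resD (n + 2) z)) = resD (n + 2) z
  | 0, z => by
    rw [resHomotopy, resD_liftCycle]
    · simp [comparison_resD]
    · intro x; simp [resD_comparison]
    · intro c x; simp [comparison_leftMul]
  | n + 1, z => by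
    rw [resHomotopy, resD_liftCycle]
    · simp [resD_resD]
    · intro x; simp [resD_resHomotopy_resD n]
    · intro c x; simp [resHomotopy_leftMul, resD_leftMul]

lemma resD_resHomotopy_succ (n : ℕ) (z : C ℤₘ ℤ (n + 3)) :
    resD (n + 3) (resHomotopy (n + 1) z) = z - resHomotopy n (resD (n + 2) z) := by
  rw [resHomotopy, resD_liftCycle]
  · rfl
  · intro x; simp [resD_resHomotopy_resD n]
  · intro c x; simp [resHomotopy_leftMul, resD_leftMul]

lemma dropHead_resHomotopy_consOne_dropHead (n : ℕ) (z : C ℤₘ ℤ (n + 2)) :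
    dropHead (n + 2) (resHomotopy n (consOne (n + 1) (dropHead (n + 1) z))) =
      dropHead (n + 2) (resHomotopy n z) := by
  induction z using Finsupp.induction_linear with
  | zero => simp
  | add f g hf hg => simp [hf, hg]
  | single y a =>
    conv_rhs => rw [single_eq_leftMul_consOne, resHomotopy_leftMul, dropHead_leftMul]
    simp

def barHomotopy (n : ℕ) : C ℤₘ ℤ (n + 1) →+ C ℤₘ ℤ (n + 2) :=
  (dropHead (n + 2)).comp ((resHomotopy n).comp (consOne (n + 1)))

lemma barD_barHomotopy_add_barHomotopy_barD (n : ℕ) (z : C ℤₘ ℤ (n + 2)) :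
    barD ℤₘ ℤ (n + 2) (barHomotopy (n + 1) z) + barHomotopy n (barD ℤₘ ℤ (n + 1) z) = z := by
  have hres : resD (n + 1) z + barD ℤₘ ℤ (n + 1) z = dropHead (n + 1) z := by
    rw [resD, AddMonoidHom.sub_apply, sub_add_cancel]
  simp only [barHomotopy, AddMonoidHom.comp_apply]
  rw [← dropHead_resD, resD_resHomotopy_succ, resD_consOne, map_sub, map_sub, map_sub,
    dropHead_consOne, ← dropHead_resHomotopy_consOne_dropHead n z, ← hres]
  simp only [map_add]
  abel

lemma eq_comp_barD_of_comp_barD_eq_zero {M : Type*} [AddCommGroup M] (n : ℕ)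
    (Φ : C ℤₘ ℤ (n + 2) →+ M) (hΦ : Φ.comp (barD ℤₘ ℤ (n + 2)) = 0) :
    (Φ.comp (barHomotopy n)).comp (barD ℤₘ ℤ (n + 1)) = Φ := by
  refine AddMonoidHom.ext fun z => ?_
  have h := congrArg Φ (barD_barHomotopy_add_barHomotopy_barD n z)
  rwa [map_add, ← AddMonoidHom.comp_apply Φ, hΦ, AddMonoidHom.zero_apply, zero_add] at h

end ContractionOfZ

section Involution

variable {Γ : Type*} [CommGroup Γ] {A : Type*} [AddCommGroup A]

lemma units_neg_one_smul (g : Γ) : (-1 : ℤˣ) • g = g⁻¹ := by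
  change g ^ ((-1 : ℤˣ) : ℤ) = g⁻¹
  simp

def invol (n : ℕ) : C Γ A n →+ C Γ A n :=
  qMap Γ A ℤˣ (-1) n

@[simp]
lemma invol_single {n : ℕ} (x : Fin n → Γ) (a : A) : invol n (single x a) = single x⁻¹ a := by
  simp only [invol, qMap, chainMapOf_single, MulDistribMulAction.toMonoidHom_apply,
    units_neg_one_smul]
  rfl

lemma barD_invol (n : ℕ) (z : C Γ A (n + 1)) :
    barD Γ A n (invol (n + 1) z) = invol n (barD Γ A n z) :=
  DFunLike.congr_fun (chainMapOf_barD Γ A _ n) z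

lemma W_eq_range (n : ℕ) : W Γ A ℤˣ n = (invol n - AddMonoidHom.id (C Γ A n)).range := by
  refine le_antisymm (iSup_le fun u => ?_) (le_iSup_of_le (-1) le_rfl)
  rcases Int.units_eq_one_or u with rfl | rfl
  · have hone : qMap Γ A ℤˣ 1 n = AddMonoidHom.id _ := by
      refine Finsupp.addHom_ext fun x a => ?_
      simp only [qMap, chainMapOf_single, MulDistribMulAction.toMonoidHom_apply, one_smul]
      rfl
    rw [hone, sub_self, AddMonoidHom.range_zero]
    exact bot_le
  · exact le_rfl

end Involution

section Cochains

variable {G : Type*} [Group G]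

def coboundary (n : ℕ) : Cochain G n →+ Cochain G (n + 1) :=
  precomp G (barD G ℤ n)

lemma coboundary_apply {n : ℕ} (φ : Cochain G n) (z : C G ℤ (n + 1)) :
    coboundary n φ z = φ (barD G ℤ n z) := rfl

@[simp]
lemma coboundary_coboundary {n : ℕ} (φ : Cochain G n) :
    coboundary (n + 1) (coboundary n φ) = 0 := by
  ext x
  simp [coboundary_apply, barD_barD]

lemma coboundary_zero (φ : Cochain G 0) : coboundary 0 φ = 0 := by
  ext x
  simp [coboundary_apply, barD_zero]

lemma cochain_add_self {n : ℕ} (φ : Cochain G n) : φ + φ = 0 := by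
  ext z
  exact CharTwo.add_self_eq_zero _

lemma cochain_neg {n : ℕ} (φ : Cochain G n) : -φ = φ :=
  neg_eq_of_add_eq_zero_left (cochain_add_self φ)

lemma cochain_sub {n : ℕ} (φ ψ : Cochain G n) : φ - ψ = φ + ψ := by
  rw [sub_eq_add_neg, cochain_neg]

lemma cochain_single {n : ℕ} (φ : Cochain G n) (x : Fin n → G) (a : ℤ) :
    φ (single x a) = a • φ (single x 1) := by
  rw [← map_zsmul, smul_single, smul_eq_mul, mul_one]

/-- Evaluation on `[1|⋯|1]`, the only simplex fixed by the involution. -/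
def evalOne (n : ℕ) : Cochain G n →+ ZMod 2 :=
  AddMonoidHom.eval (single 1 1)

lemma barFace_one {n : ℕ} (i : Fin (n + 2)) : barFace i (1 : Fin (n + 1) → G) = 1 := by
  funext t
  simp only [barFace]
  split_ifs <;> simp

lemma barD_single_one (n : ℕ) (a : ℤ) :
    barD G ℤ n (single 1 a) = if Even n then 0 else single 1 a := by
  have hsum : ∑ i : Fin (n + 2), (-1 : ℤ) ^ (i : ℕ) = if Even n then 0 else 1 := by
    rw [Fin.sum_univ_eq_sum_range (fun i => (-1 : ℤ) ^ i), neg_one_geom_sum]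
    simp [Nat.even_add]
  rw [barD_single]
  simp_rw [barFace_one, ← single_finsetSum, ← Finset.sum_smul, hsum]
  split_ifs <;> simp

lemma evalOne_coboundary (n : ℕ) (ψ : Cochain G n) :
    evalOne (n + 1) (coboundary n ψ) = if Even n then 0 else evalOne n ψ := by
  simp only [evalOne, AddMonoidHom.eval_apply_apply, coboundary_apply, barD_single_one]
  split_ifs <;> simp

def dualOne (n : ℕ) : Cochain G n :=
  (Int.castAddHom (ZMod 2)).comp (Finsupp.applyAddHom 1)

@[simp]
lemma evalOne_dualOne (n : ℕ) : evalOne n (dualOne n : Cochain G n) = 1 := by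
  simp [evalOne, dualOne]

end Cochains

section InvariantCochains

variable {Γ : Type*} [CommGroup Γ]

def cochainInvol (n : ℕ) : Cochain Γ n →+ Cochain Γ n :=
  precomp Γ (invol n)

lemma cochainInvol_apply {n : ℕ} (φ : Cochain Γ n) (z : C Γ ℤ n) :
    cochainInvol n φ z = φ (invol n z) := rfl

@[simp]
lemma cochainInvol_cochainInvol {n : ℕ} (φ : Cochain Γ n) :
    cochainInvol n (cochainInvol n φ) = φ := by
  ext z
  simp [cochainInvol_apply]

lemma cochainInvol_coboundary {n : ℕ} (φ : Cochain Γ n) :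
    cochainInvol (n + 1) (coboundary n φ) = coboundary n (cochainInvol n φ) :=
  AddMonoidHom.ext fun z => by simp only [cochainInvol_apply, coboundary_apply, barD_invol]

@[simp]
lemma evalOne_cochainInvol {n : ℕ} (φ : Cochain Γ n) :
    evalOne n (cochainInvol n φ) = evalOne n φ := by
  simp [evalOne, cochainInvol_apply]

lemma cochainInvol_dualOne (n : ℕ) : cochainInvol n (dualOne n : Cochain Γ n) = dualOne n := by
  classical
  refine Finsupp.addHom_ext fun x a => ?_
  simp [cochainInvol_apply, dualOne, single_apply, inv_eq_one]

lemma cochainInvol_add_self {n : ℕ} (φ : Cochain Γ n) :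
    cochainInvol n (φ + cochainInvol n φ) = φ + cochainInvol n φ := by
  rw [map_add, cochainInvol_cochainInvol, add_comm]

lemma mem_vanishing_W_iff {n : ℕ} (φ : Cochain Γ n) :
    φ ∈ vanishing Γ n (W Γ ℤ ℤˣ n) ↔ cochainInvol n φ = φ := by
  simp only [vanishing, W_eq_range, AddSubgroup.mem_mk, AddSubmonoid.mem_mk,
    AddSubsemigroup.mem_mk, Set.mem_ofPred_eq, AddMonoidHom.mem_range, forall_exists_index,
    forall_apply_eq_imp_iff, AddMonoidHom.sub_apply, AddMonoidHom.id_apply, map_sub, sub_eq_zero]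
  exact ⟨fun h => AddMonoidHom.ext h, fun h z => DFunLike.congr_fun h z⟩

lemma mem_quotCocycles_iff {n : ℕ} (φ : Cochain Γ n) :
    φ ∈ quotCocycles Γ ℤˣ n ↔ cochainInvol n φ = φ ∧ coboundary n φ = 0 := by
  rw [quotCocycles, AddSubgroup.mem_inf, mem_vanishing_W_iff, AddMonoidHom.mem_ker]
  rfl

lemma mem_quotCoboundaries_iff {n : ℕ} (φ : Cochain Γ (n + 1)) :
    φ ∈ quotCoboundaries Γ ℤˣ (n + 1) ↔ ∃ ψ, cochainInvol n ψ = ψ ∧ coboundary n ψ = φ := by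
  simp only [quotCoboundaries, AddSubgroup.mem_map, mem_vanishing_W_iff]
  rfl

/-- The cochains of the pair `(X/Γ, Y)`. -/
def relCochains (Γ : Type*) [CommGroup Γ] (n : ℕ) : AddSubgroup (Cochain Γ n) :=
  (cochainInvol n - AddMonoidHom.id _).ker ⊓ (evalOne n).ker

lemma mem_relCochains {n : ℕ} {φ : Cochain Γ n} :
    φ ∈ relCochains Γ n ↔ cochainInvol n φ = φ ∧ evalOne n φ = 0 := by
  simp [relCochains, sub_eq_zero]

def relCocycles (Γ : Type*) [CommGroup Γ] (n : ℕ) : AddSubgroup (Cochain Γ n) :=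
  relCochains Γ n ⊓ (coboundary n).ker

lemma mem_relCocycles {n : ℕ} {φ : Cochain Γ n} :
    φ ∈ relCocycles Γ n ↔ (cochainInvol n φ = φ ∧ evalOne n φ = 0) ∧ coboundary n φ = 0 := by
  rw [relCocycles, AddSubgroup.mem_inf, mem_relCochains, AddMonoidHom.mem_ker]

def relCoboundaries (Γ : Type*) [CommGroup Γ] (n : ℕ) : AddSubgroup (Cochain Γ (n + 1)) :=
  (relCochains Γ n).map (coboundary n)

lemma add_cochainInvol_mem_relCochains {n : ℕ} (ψ : Cochain Γ n) :
    ψ + cochainInvol n ψ ∈ relCochains Γ n :=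
  mem_relCochains.2 ⟨cochainInvol_add_self ψ, by simp [CharTwo.add_self_eq_zero]⟩

lemma relCocycles_le_quotCocycles (n : ℕ) : relCocycles Γ n ≤ quotCocycles Γ ℤˣ n :=
  fun φ hφ => (mem_quotCocycles_iff φ).2
    ⟨(mem_relCocycles.1 hφ).1.1, (mem_relCocycles.1 hφ).2⟩

lemma exists_evalOne_add_coboundary_eq_zero (k : ℕ) (φ : Cochain Γ (k + 1))
    (hφ : Even k → evalOne (k + 1) φ = 0) :
    ∃ ψ, cochainInvol k ψ = ψ ∧ evalOne (k + 1) (φ + coboundary k ψ) = 0 := by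
  by_cases hk : Even k
  · exact ⟨0, map_zero _, by simp [hφ hk]⟩
  rcases (by decide : ∀ r : ZMod 2, r = 0 ∨ r = 1) (evalOne (k + 1) φ) with h | h
  · exact ⟨0, map_zero _, by simp [h]⟩
  · refine ⟨dualOne k, cochainInvol_dualOne k, ?_⟩
    rw [map_add, evalOne_coboundary, if_neg hk, h, evalOne_dualOne]
    decide

def restrictCohomology (Γ : Type*) [CommGroup Γ] (k : ℕ) :
    relCocycles Γ (k + 1) →+ quotCohomology Γ ℤˣ (k + 1) :=
  (QuotientAddGroup.mk' _).comp (AddSubgroup.inclusion (relCocycles_le_quotCocycles (k + 1)))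

lemma restrictCohomology_surjective (k : ℕ) :
    Function.Surjective (restrictCohomology Γ k) := by
  rintro ⟨φ⟩
  obtain ⟨hinv, hcoc⟩ := (mem_quotCocycles_iff φ.1).1 φ.2
  have hfix : Even k → evalOne (k + 1) φ.1 = 0 := fun hk => by
    have := congrArg (evalOne (k + 2)) hcoc
    rwa [evalOne_coboundary, if_neg (by simpa [Nat.even_add_one] using hk), map_zero] at this
  obtain ⟨ψ, hψ, hψfix⟩ := exists_evalOne_add_coboundary_eq_zero k φ.1 hfix
  have hmem : φ.1 + coboundary k ψ ∈ relCocycles Γ (k + 1) := mem_relCocycles.2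
    ⟨⟨by rw [map_add, cochainInvol_coboundary, hψ, hinv], hψfix⟩, by simp [hcoc]⟩
  refine ⟨⟨_, hmem⟩, (QuotientAddGroup.eq_iff_sub_mem).2 ?_⟩
  rw [AddSubgroup.mem_addSubgroupOf, AddSubgroup.coe_sub, AddSubgroup.coe_inclusion,
    mem_quotCoboundaries_iff]
  exact ⟨ψ, hψ, by simp⟩

lemma ker_restrictCohomology (k : ℕ) :
    (restrictCohomology Γ k).ker =
      (relCoboundaries Γ k).addSubgroupOf (relCocycles Γ (k + 1)) := by
  refine AddSubgroup.ext fun ⟨φ, hφ⟩ => ?_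
  obtain ⟨⟨hinv, hfix⟩, -⟩ := mem_relCocycles.1 hφ
  simp only [restrictCohomology, AddMonoidHom.mem_ker, AddMonoidHom.comp_apply,
    QuotientAddGroup.mk'_apply, QuotientAddGroup.eq_zero_iff, AddSubgroup.mem_addSubgroupOf,
    AddSubgroup.coe_inclusion, mem_quotCoboundaries_iff, relCoboundaries, AddSubgroup.mem_map,
    mem_relCochains]
  constructor
  · rintro ⟨ψ, hψ, rfl⟩
    cases k with
    | zero => exact ⟨0, ⟨map_zero _, map_zero _⟩, by rw [map_zero, coboundary_zero]⟩
    | succ k =>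
      have hψfix : Even k → evalOne (k + 1) ψ = 0 := fun hk => by
        rwa [evalOne_coboundary, if_neg (by simpa [Nat.even_add_one] using hk)] at hfix
      obtain ⟨ψ', hψ', hψ'fix⟩ := exists_evalOne_add_coboundary_eq_zero k ψ hψfix
      exact ⟨ψ + coboundary k ψ', ⟨by rw [map_add, cochainInvol_coboundary, hψ, hψ'], hψ'fix⟩,
        by simp⟩
  · rintro ⟨ψ, ⟨hψ, -⟩, rfl⟩
    exact ⟨ψ, hψ, rfl⟩

end InvariantCochains

section Canonical

variable {Γ : Type*} [CommGroup Γ] [LinearOrder Γ]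

def IsCanonical {n : ℕ} (x : Fin n → Γ) : Prop :=
  ∃ i, 1 < x i ∧ ∀ j < i, x j = 1

lemma not_isCanonical_one (n : ℕ) : ¬ IsCanonical (1 : Fin n → Γ) := by
  rintro ⟨i, hi, -⟩
  exact hi.ne' rfl

lemma isCanonical_iff_of_first {n : ℕ} {x : Fin n → Γ} {i : Fin n} (hi : x i ≠ 1)
    (hfirst : ∀ j < i, x j = 1) : IsCanonical x ↔ 1 < x i := by
  refine ⟨fun ⟨i', hi', hfirst'⟩ => ?_, fun h => ⟨i, h, hfirst⟩⟩
  rcases lt_trichotomy i i' with h | rfl | h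
  · exact absurd (hfirst' i h) hi
  · exact hi'
  · exact absurd (hfirst i' h) hi'.ne'

lemma isCanonical_inv_iff [IsOrderedMonoid Γ] {n : ℕ} {x : Fin n → Γ} (hx : x ≠ 1) :
    IsCanonical x⁻¹ ↔ ¬ IsCanonical x := by
  obtain ⟨i, hi, hmin⟩ := wellFounded_lt.has_min {j | x j ≠ 1} (Function.ne_iff.1 hx)
  have hfirst : ∀ j < i, x j = 1 := fun j hj => by_contra fun h => hmin j h hj
  rw [isCanonical_iff_of_first hi hfirst,
    isCanonical_iff_of_first (by simpa using hi) (by simpa using hfirst), Pi.inv_apply,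
    one_lt_inv', not_lt]
  exact ⟨le_of_lt, fun h => lt_of_le_of_ne h hi⟩

variable {A : Type*} [AddCommGroup A]

open Classical in
def selectCanonical (n : ℕ) : C Γ A n →+ C Γ A n :=
  Finsupp.liftAddHom fun x => if IsCanonical x then singleAddHom x else 0

open Classical in
lemma selectCanonical_single {n : ℕ} (x : Fin n → Γ) (a : A) :
    selectCanonical n (single x a) = if IsCanonical x then single x a else 0 := by
  rw [selectCanonical, liftAddHom_apply_single]
  split_ifs <;> rfl

lemma map_selectCanonical_add_map_selectCanonical_invol [IsOrderedMonoid Γ] {M : Type*}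
    [AddCommGroup M] {n : ℕ} (f : C Γ A n →+ M) (hf : ∀ z, f (invol n z) = f z)
    (hone : ∀ a, f (single 1 a) = 0) (z : C Γ A n) :
    f (selectCanonical n z) + f (selectCanonical n (invol n z)) = f z := by
  induction z using Finsupp.induction_linear with
  | zero => simp
  | add z z' hz hz' => simp only [map_add]; rw [← hz, ← hz']; abel
  | single x a =>
    rw [invol_single, selectCanonical_single, selectCanonical_single]
    by_cases hx : x = 1
    · simp [hx, not_isCanonical_one, hone]
    by_cases hc : IsCanonical x
    · have hc' : ¬ IsCanonical x⁻¹ := fun h => (isCanonical_inv_iff hx).1 h hc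
      simp [hc, hc']
    · simp [hc, (isCanonical_inv_iff hx).2 hc, ← invol_single, hf]

def halfCochain (n : ℕ) : Cochain Γ n →+ Cochain Γ n :=
  precomp Γ (selectCanonical n)

lemma halfCochain_add_cochainInvol [IsOrderedMonoid Γ] {n : ℕ} {φ : Cochain Γ n}
    (hφ : φ ∈ relCochains Γ n) : halfCochain n φ + cochainInvol n (halfCochain n φ) = φ := by
  obtain ⟨hinv, hfix⟩ := mem_relCochains.1 hφ
  refine AddMonoidHom.ext fun z => map_selectCanonical_add_map_selectCanonical_invol φ
    (fun z => DFunLike.congr_fun hinv z) (fun a => ?_) z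
  rw [cochain_single, ← AddMonoidHom.eval_apply_apply, ← evalOne, hfix, smul_zero]

lemma cochainInvol_halfCochain [IsOrderedMonoid Γ] {n : ℕ} {φ : Cochain Γ n}
    (hφ : φ ∈ relCochains Γ n) : cochainInvol n (halfCochain n φ) = φ + halfCochain n φ := by
  rw [eq_sub_of_add_eq' (halfCochain_add_cochainInvol hφ), cochain_sub]

/-- The Smith-type connecting map `[s + τs] ↦ [δs]` from `H^(k+1)(X/Γ, Y)`. -/
def smithMap (Γ : Type*) [CommGroup Γ] [LinearOrder Γ] [IsOrderedMonoid Γ] (k : ℕ) :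
    relCocycles Γ (k + 1) →+ quotCohomology Γ ℤˣ (k + 2) :=
  (QuotientAddGroup.mk' _).comp
    (((coboundary (k + 1)).comp
      ((halfCochain (k + 1)).comp (relCocycles Γ (k + 1)).subtype)).codRestrict _ fun φ => by
        obtain ⟨⟨hinv, hfix⟩, hcoc⟩ := mem_relCocycles.1 φ.2
        refine (mem_quotCocycles_iff _).2 ⟨?_, coboundary_coboundary _⟩
        simp [cochainInvol_coboundary, cochainInvol_halfCochain (mem_relCochains.2 ⟨hinv, hfix⟩),
          hcoc])

end Canonical

section DegreeOne

lemma cocycle_one_single (u : Cochain ℤₘ 1) (hu : coboundary 1 u = 0) (x : Fin 1 → ℤₘ)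
    (a : ℤ) : u (single x a) = (a * toAdd (x 0)) • u (single (fun _ => ofAdd 1) 1) := by
  let F : ℤ →+ ZMod 2 := AddMonoidHom.mk' (fun m => u (single (fun _ => ofAdd m) 1))
    fun s t => by
      have h := DFunLike.congr_fun hu (single ![ofAdd s, ofAdd t] 1)
      rw [coboundary_apply, barD_one_single, AddMonoidHom.zero_apply] at h
      simp only [Matrix.cons_val_zero, Matrix.cons_val_one, map_add, map_sub, ← ofAdd_add] at h
      linear_combination (exp := 1) -h
  have hx : x = fun _ => ofAdd (toAdd (x 0)) := funext fun j => by simp [Subsingleton.elim j 0]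
  rw [cochain_single, hx, mul_smul]
  exact congrArg (a • ·) (AddMonoidHom.apply_int _ F _)

lemma cocycle_one_add_cochainInvol (u : Cochain ℤₘ 1) (hu : coboundary 1 u = 0) :
    u + cochainInvol 1 u = 0 := by
  refine Finsupp.addHom_ext fun x a => ?_
  rw [AddMonoidHom.add_apply, cochainInvol_apply, invol_single, cocycle_one_single u hu x,
    cocycle_one_single u hu x⁻¹, ← add_smul, Pi.inv_apply, toAdd_inv]
  simp

def parity : Cochain ℤₘ 1 :=
  Finsupp.liftAddHom fun x => (Int.castAddHom (ZMod 2)).comp (zmultiplesHom ℤ (toAdd (x 0)))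

lemma parity_single (x : Fin 1 → ℤₘ) (a : ℤ) :
    parity (single x a) = ((a * toAdd (x 0) : ℤ) : ZMod 2) := by
  simp [parity]

lemma coboundary_parity : coboundary 1 parity = 0 := by
  refine Finsupp.addHom_ext fun y a => ?_
  simp only [coboundary_apply, barD_one_single, map_add, map_sub, parity_single, toAdd_mul,
    AddMonoidHom.zero_apply]
  push_cast
  ring

lemma parity_mem_quotCocycles : parity ∈ quotCocycles ℤₘ ℤˣ 1 := by
  refine (mem_quotCocycles_iff _).2 ⟨?_, coboundary_parity⟩
  rw [← neg_eq_of_add_eq_zero_right (cocycle_one_add_cochainInvol _ coboundary_parity),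
    cochain_neg]

def evalGenerator : quotCocycles ℤₘ ℤˣ 1 →+ ZMod 2 :=
  (AddMonoidHom.eval (single (fun _ => ofAdd 1) 1)).comp (quotCocycles ℤₘ ℤˣ 1).subtype

lemma evalGenerator_surjective : Function.Surjective evalGenerator := by
  intro r
  rcases (by decide : ∀ r : ZMod 2, r = 0 ∨ r = 1) r with rfl | rfl
  · exact ⟨0, map_zero _⟩
  · exact ⟨⟨parity, parity_mem_quotCocycles⟩, by simp [evalGenerator, parity_single]⟩

lemma ker_evalGenerator :
    evalGenerator.ker = (quotCoboundaries ℤₘ ℤˣ 1).addSubgroupOf (quotCocycles ℤₘ ℤˣ 1) := by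
  refine AddSubgroup.ext fun ⟨u, hu⟩ => ?_
  have hcoc := ((mem_quotCocycles_iff u).1 hu).2
  simp only [AddMonoidHom.mem_ker, AddSubgroup.mem_addSubgroupOf, mem_quotCoboundaries_iff,
    coboundary_zero]
  constructor
  · intro h
    have hgen : u (single (fun _ => ofAdd 1) 1) = 0 := h
    refine ⟨0, map_zero _, (Finsupp.addHom_ext fun x a => ?_).symm⟩
    rw [cocycle_one_single u hcoc, hgen, smul_zero, AddMonoidHom.zero_apply]
  · rintro ⟨ψ, -, rfl⟩
    rfl

def cohomologyOneEquiv : quotCohomology ℤₘ ℤˣ 1 ≃+ ZMod 2 :=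
  (QuotientAddGroup.quotientAddEquivOfEq ker_evalGenerator.symm).trans
    (QuotientAddGroup.quotientKerEquivOfSurjective _ evalGenerator_surjective)

end DegreeOne

section Smith

lemma smithMap_surjective (k : ℕ) : Function.Surjective (smithMap ℤₘ k) := by
  rintro ⟨Φ⟩
  obtain ⟨hinv, hcoc⟩ := (mem_quotCocycles_iff Φ.1).1 Φ.2
  set Ψ := Φ.1.comp (barHomotopy k)
  have hΨ : coboundary (k + 1) Ψ = Φ.1 := eq_comp_barD_of_comp_barD_eq_zero k Φ.1 hcoc
  have hφ : Ψ + cochainInvol (k + 1) Ψ ∈ relCocycles ℤₘ (k + 1) := by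
    refine mem_relCocycles.2 ⟨mem_relCochains.1 (add_cochainInvol_mem_relCochains Ψ), ?_⟩
    rw [map_add, ← cochainInvol_coboundary, hΨ, hinv, cochain_add_self]
  refine ⟨⟨_, hφ⟩, (QuotientAddGroup.eq_iff_sub_mem).2 ?_⟩
  rw [AddSubgroup.mem_addSubgroupOf, AddSubgroup.coe_sub, mem_quotCoboundaries_iff]
  refine ⟨halfCochain (k + 1) (Ψ + cochainInvol (k + 1) Ψ) - Ψ, ?_, ?_⟩
  · rw [map_sub, cochainInvol_halfCochain (add_cochainInvol_mem_relCochains Ψ)]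
    abel_nf
    simp [cochain_neg]
  · simp [hΨ]

lemma ker_smithMap (k : ℕ) :
    (smithMap ℤₘ k).ker = (relCoboundaries ℤₘ k).addSubgroupOf (relCocycles ℤₘ (k + 1)) := by
  refine AddSubgroup.ext fun ⟨φ, hφ⟩ => ?_
  obtain ⟨⟨hinv, hfix⟩, hcoc⟩ := mem_relCocycles.1 hφ
  have hrel : φ ∈ relCochains ℤₘ (k + 1) := mem_relCochains.2 ⟨hinv, hfix⟩
  simp only [smithMap, AddMonoidHom.mem_ker, AddMonoidHom.comp_apply, QuotientAddGroup.mk'_apply,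
    QuotientAddGroup.eq_zero_iff, AddSubgroup.mem_addSubgroupOf, AddMonoidHom.codRestrict_apply,
    AddSubgroup.coe_subtype, mem_quotCoboundaries_iff, relCoboundaries, AddSubgroup.mem_map]
  constructor
  · rintro ⟨Ξ, hΞ, hδ⟩
    have hu : coboundary (k + 1) (halfCochain (k + 1) φ - Ξ) = 0 := by
      rw [map_sub, hδ, sub_self]
    have hφu : φ = (halfCochain (k + 1) φ - Ξ) +
        cochainInvol (k + 1) (halfCochain (k + 1) φ - Ξ) := by
      rw [map_sub, hΞ, cochainInvol_halfCochain hrel]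
      abel_nf
      simp [two_zsmul, cochain_add_self]
    cases k with
    | zero => exact ⟨0, zero_mem _, by rw [map_zero, hφu, cocycle_one_add_cochainInvol _ hu]⟩
    | succ k =>
      set u := halfCochain (k + 2) φ - Ξ
      have hΨ : coboundary (k + 1) (u.comp (barHomotopy k)) = u :=
        eq_comp_barD_of_comp_barD_eq_zero k u hu
      exact ⟨_, add_cochainInvol_mem_relCochains (u.comp (barHomotopy k)), by
        rw [map_add, ← cochainInvol_coboundary (u.comp (barHomotopy k)), hΨ, hφu]⟩
  · rintro ⟨β, hβ, rfl⟩
    refine ⟨halfCochain (k + 1) (coboundary k β) + coboundary k (halfCochain k β), ?_, by simp⟩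
    rw [map_add, cochainInvol_halfCochain hrel, cochainInvol_coboundary,
      cochainInvol_halfCochain hβ, map_add]
    abel_nf
    simp [two_zsmul, cochain_add_self]

def addEquivOfSurjectiveOfKerEq {M P R : Type*} [AddGroup M] [AddGroup P] [AddGroup R]
    (f : M →+ P) (g : M →+ R) (hf : Function.Surjective f) (hg : Function.Surjective g)
    (h : f.ker = g.ker) : P ≃+ R :=
  (QuotientAddGroup.quotientKerEquivOfSurjective f hf).symm.trans
    ((QuotientAddGroup.quotientAddEquivOfEq h).trans
      (QuotientAddGroup.quotientKerEquivOfSurjective g hg))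

def cohomologySuccSuccEquiv (k : ℕ) :
    quotCohomology ℤₘ ℤˣ (k + 2) ≃+ quotCohomology ℤₘ ℤˣ (k + 1) :=
  addEquivOfSurjectiveOfKerEq _ _ (smithMap_surjective k) (restrictCohomology_surjective k)
    ((ker_smithMap k).trans (ker_restrictCohomology k).symm)

end Smith

end

end IGC

/-- for `ℤ/2 = ℤˣ` acting on `ℤ` by negation, `Γ = ℤ/2`, `X = Bℤ`:
`H^q(X/Γ;ℤ/2) ≅ ℤ/2` for all `q ≥ 1`. -/
theorem stmt18 (q : ℕ) (hq : 1 ≤ q) :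
    Nonempty (IGC.quotCohomology (Multiplicative ℤ) ℤˣ q ≃+ ZMod 2) := by
  induction q, hq using Nat.le_induction with
  | base => exact ⟨IGC.cohomologyOneEquiv⟩
  | succ q hq ih =>
    obtain ⟨k, rfl⟩ := Nat.exists_eq_add_of_le' hq
    exact ⟨(IGC.cohomologySuccSuccEquiv k).trans ih.some⟩
end
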